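/- Let (G, M, I) be a formal context and f : M → M' a map of attributes, with merged context (G, M', I') defined by g I' m' iff ∃ m, f(m) = m' ∧ g I m. Then for every B' ⊆ M', ext_{I'}(B') ⊇ ext_I(f⁻¹(B')) need not hold in general, but if f is injective on the set of attributes actually possessed by objects and merged attributes have equal original extents (ext_I({m₁}) = ext_I({m₂}) whenever f(m₁) = f(m₂)), then ext_{I'}({m'}) = ext_I({m}) for any m with f(m) = m'. Under this hypothesis, the map sending a concept (A, B) of (G, M, I) to (A, f(B)) induces an order isomorphism between the concept lattices of (G, M, I) and (G, M', I'). -/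

import Mathlib

def extentOp {G M : Type*} (I : G → M → Prop) (B : Set M) : Set G :=
  {g | ∀ m ∈ B, I g m}

def intentOp {G M : Type*} (I : G → M → Prop) (A : Set G) : Set M :=
  {m | ∀ g ∈ A, I g m}

theorem merged_context_concept_iso {G M M' : Type*} (I : G → M → Prop)
    (f : M → M') (hf : Function.Surjective f)
    (hinj : Set.InjOn f {m | ∃ g, I g m})
    (heq : ∀ m₁ m₂, f m₁ = f m₂ → extentOp I {m₁} = extentOp I {m₂}) :
    (∀ m' m, f m = m' →
      extentOp (fun g m' => ∃ m, f m = m' ∧ I g m) {m'} = extentOp I {m}) ∧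
    ∃ e : Concept G M I ≃o Concept G M' (fun g m' => ∃ m, f m = m' ∧ I g m),
      ∀ c : Concept G M I, (e c).extent = c.extent ∧ (e c).intent = f '' c.intent := by
  set I' : G → M' → Prop := fun g m' => ∃ m, f m = m' ∧ I g m with hI'
  -- key lemma 1: extent of image
  have key1 : ∀ B : Set M, lowerPolar I' (f '' B) = lowerPolar I B := by
    intro B
    ext g
    constructor
    · intro hg m hm
      obtain ⟨m₂, hfm₂, hIm₂⟩ := hg (Set.mem_image_of_mem f hm)
      have := heq m₂ m hfm₂
      have hg2 : g ∈ extentOp I {m₂} := fun x hx => by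
        rw [Set.mem_singleton_iff] at hx; subst hx; exact hIm₂
      rw [this] at hg2
      exact hg2 m rfl
    · intro hg m' hm'
      obtain ⟨m, hm, rfl⟩ := hm'
      exact ⟨m, rfl, hg hm⟩
  -- key lemma 2: intent of image
  have key2 : ∀ A : Set G, upperPolar I' A = f '' upperPolar I A := by
    intro A
    rcases A.eq_empty_or_nonempty with rfl | ⟨g₀, hg₀⟩
    · ext m'
      obtain ⟨m, rfl⟩ := hf m'
      constructor
      · intro _
        exact ⟨m, fun g hg => absurd hg (Set.notMem_empty g), rfl⟩
      · intro _ g hg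
        exact absurd hg (Set.notMem_empty g)
    · ext m'
      constructor
      · intro hm'
        obtain ⟨m, hfm, hIm⟩ := hm' hg₀
        refine ⟨m, fun g hg => ?_, hfm⟩
        obtain ⟨m₂, hfm₂, hIm₂⟩ := hm' hg
        have : m₂ = m := hinj ⟨g, hIm₂⟩ ⟨g₀, hIm⟩ (hfm₂.trans hfm.symm)
        rwa [this] at hIm₂
      · rintro ⟨m, hm, rfl⟩ g hg
        exact ⟨m, rfl, hm hg⟩
  constructor
  · rintro m' m rfl
    have := key1 {m}
    rwa [Set.image_singleton] at this
  · refine ⟨⟨⟨fun c => ⟨c.extent, f '' c.intent, ?_, ?_⟩,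
      fun d => ⟨d.extent, upperPolar I d.extent, rfl, ?_⟩, ?_, ?_⟩, ?_⟩, fun c => ⟨rfl, rfl⟩⟩
    · rw [key2, c.upperPolar_extent]
    · rw [key1, c.lowerPolar_intent]
    · show lowerPolar I (upperPolar I d.extent) = d.extent
      rw [← key1, ← key2, d.upperPolar_extent, d.lowerPolar_intent]
    · intro c; exact Concept.ext rfl
    · intro d; exact Concept.ext rfl
    · intro c d
      simp only [Equiv.coe_fn_mk, ← Concept.extent_subset_extent_iff]
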